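/- arXiv:2206.08860 — 3 statements merged into one kernel-verified Lean document; each statement's English description precedes it below -/
import Mathlib

section
/- Let G be a connected finite simple graph on n vertices with q(G) = 2. If S is an independent set of vertices of G (no two vertices of S are adjacent), then |S| ≤ ⌊n/2⌋. -/
/-!
Take `A ∈ S(G)` with exactly two eigenvalues `l, m`; being diagonalizable, it satisfies
`A² = (l + m) A - l m I`. For distinct `i, j` of an independent set `S` we have `A i j = 0`,
hence `(A²) i j = 0`: the rows of `A` indexed by `S` are pairwise orthogonal, and since they
vanish on `S` off the diagonal, so are their restrictions to `Sᶜ`. These restrictions are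
nonzero because in a connected graph every vertex has a neighbour, necessarily outside `S`.
Hence `|S| ≤ |Sᶜ|`.
-/

open Matrix

/-- `SOfGraph G` is the set of real symmetric matrices whose off-diagonal zero
pattern is described by the graph `G` (diagonal entries unrestricted). -/
def SOfGraph {V : Type*} [Fintype V] [DecidableEq V] (G : SimpleGraph V) :
    Set (Matrix V V ℝ) :=
  {A | A.IsSymm ∧ ∀ i j : V, i ≠ j → (A i j ≠ 0 ↔ G.Adj i j)}

/-- `qGraph G` is the minimum number of distinct eigenvalues over matrices in `SOfGraph G`. -/
noncomputable def qGraph {V : Type*} [Fintype V] [DecidableEq V] (G : SimpleGraph V) : ℕ :=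
  sInf ((fun A => (spectrum ℝ A).ncard) '' SOfGraph G)

/-- Eccentricity of a vertex: maximum graph distance to any vertex. -/
noncomputable def graphEccent {V : Type*} [Fintype V] (G : SimpleGraph V) (v : V) : ℕ :=
  Finset.univ.sup fun w => G.dist v w

/-- Double-ended candle `G_k` on `2k` vertices: vertex `i` lies in level `(i+1)/2`,
so level `0` and level `k` have one vertex each and intermediate levels have two;
two vertices are adjacent iff they lie in consecutive levels. -/
def doubleCandle (k : ℕ) : SimpleGraph (Fin (2 * k)) :=
  SimpleGraph.fromRel fun a b => (a.val + 1) / 2 + 1 = (b.val + 1) / 2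

/-- Single-ended candle `G'_k` on `2k+1` vertices: vertex `i` lies in level `(i+1)/2`,
so level `0` has one vertex and levels `1,…,k` have two vertices each; two distinct
vertices are adjacent iff they lie in consecutive levels or both lie in level `k`. -/
def singleCandle (k : ℕ) : SimpleGraph (Fin (2 * k + 1)) :=
  SimpleGraph.fromRel fun a b =>
    (a.val + 1) / 2 + 1 = (b.val + 1) / 2 ∨ ((a.val + 1) / 2 = k ∧ (b.val + 1) / 2 = k)

open Polynomial

lemma aeval_eq_zero_of_forall_mem_spectrum_isRoot {R A : Type*} {p : A → Prop} [CommSemiring R]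
    [StarRing R] [MetricSpace R] [IsTopologicalSemiring R] [ContinuousStar R]
    [TopologicalSpace A] [Ring A] [StarRing A] [Algebra R A]
    [ContinuousFunctionalCalculus R A p] {a : A} (ha : p a) {q : R[X]}
    (hq : ∀ x ∈ spectrum R a, q.IsRoot x) : aeval a q = 0 := by
  rw [← cfc_polynomial q a ha, cfc_congr (g := 0) hq, cfc_zero]

namespace Matrix

variable {n 𝕜 : Type*} [Fintype n] [DecidableEq n] [RCLike 𝕜]

lemma IsHermitian.mul_self_eq_of_spectrum_subset_pair {A : Matrix n n 𝕜} (hA : A.IsHermitian)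
    {l m : ℝ} (h : spectrum ℝ A ⊆ {l, m}) : A * A = (l + m) • A - (l * m) • 1 := by
  have hq := aeval_eq_zero_of_forall_mem_spectrum_isRoot (q := (X - C l) * (X - C m))
    hA.isSelfAdjoint fun x hx => by rcases h hx with rfl | rfl <;> simp
  simp only [map_mul, map_sub, aeval_X, aeval_C, Algebra.algebraMap_eq_smul_one, sub_mul,
    mul_sub, mul_smul_comm, smul_mul_assoc, one_mul, mul_one] at hq
  rw [← sub_eq_zero, ← hq]
  module

lemma IsHermitian.ncard_spectrum_le_card {A : Matrix n n 𝕜} (hA : A.IsHermitian) :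
    (spectrum ℝ A).ncard ≤ Fintype.card n := by
  rw [hA.spectrum_real_eq_range_eigenvalues, ← Set.image_univ, ← Nat.card_eq_fintype_card,
    ← Set.ncard_univ n]
  exact Set.ncard_image_le Set.finite_univ

lemma ncard_le_ncard_compl_of_orthogonal_rows {V : Type*} [Fintype V] (A : Matrix V V ℝ)
    (S : Set V) (hzero : ∀ i ∈ S, ∀ j ∈ S, i ≠ j → A i j = 0)
    (horth : ∀ i ∈ S, ∀ j ∈ S, i ≠ j → (A * Aᵀ) i j = 0)
    (hrow : ∀ i ∈ S, ∃ k ∉ S, A i k ≠ 0) : S.ncard ≤ Sᶜ.ncard := by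
  classical
  let M : Matrix S ↥Sᶜ ℝ := A.submatrix (↑) (↑)
  have hMM : M * Mᵀ = diagonal fun i : S => ∑ k : ↥Sᶜ, A i k ^ 2 := by
    ext i j
    rcases eq_or_ne i j with rfl | hij
    · simp [M, mul_apply, sq]
    · have hij' : (i : V) ≠ j := Subtype.coe_ne_coe.mpr hij
      have hS : ∑ k : S, A i k * A j k = 0 := Finset.sum_eq_zero fun k _ => by
        rcases eq_or_ne (k : V) i with hk | hk
        · rw [hk, hzero j j.2 i i.2 hij'.symm, mul_zero]
        · rw [hzero i i.2 k k.2 hk.symm, zero_mul]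
      rw [diagonal_apply_ne _ hij, ← horth i i.2 j j.2 hij', mul_apply, mul_apply,
        ← Fintype.sum_subtype_add_sum_subtype (· ∈ S)]
      simp only [M, submatrix_apply, transpose_apply, hS, zero_add]
      rfl
  have hunit : IsUnit (M * Mᵀ) := by
    rw [hMM, isUnit_diagonal, Pi.isUnit_iff]
    intro i
    obtain ⟨k, hk, hik⟩ := hrow i i.2
    refine (Finset.sum_pos' (fun _ _ => sq_nonneg _) ⟨⟨k, hk⟩, Finset.mem_univ _, ?_⟩).ne'.isUnit
    positivity
  calc S.ncard = Fintype.card S := by rw [← Nat.card_coe_set_eq, Nat.card_eq_fintype_card]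
    _ = (M * Mᵀ).rank := (rank_of_isUnit _ hunit).symm
    _ ≤ M.rank := rank_mul_le_left M Mᵀ
    _ ≤ Fintype.card ↥Sᶜ := rank_le_card_width M
    _ = Sᶜ.ncard := by rw [← Nat.card_coe_set_eq, Nat.card_eq_fintype_card]

end Matrix

lemma exists_mem_SOfGraph_ncard_spectrum_eq_qGraph {V : Type*} [Fintype V] [DecidableEq V]
    (G : SimpleGraph V) (h : qGraph G ≠ 0) :
    ∃ A ∈ SOfGraph G, (spectrum ℝ A).ncard = qGraph G :=
  Nat.sInf_mem (Nat.nonempty_of_pos_sInf (Nat.pos_of_ne_zero h))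

section SOfGraph

variable {V : Type*} [Fintype V] [DecidableEq V] {G : SimpleGraph V} {A : Matrix V V ℝ}

lemma isHermitian_of_mem_SOfGraph (hA : A ∈ SOfGraph G) : A.IsHermitian :=
  (conjTranspose_eq_transpose_of_trivial A).trans hA.1

lemma apply_eq_zero_of_mem_SOfGraph (hA : A ∈ SOfGraph G) {i j : V} (hij : i ≠ j)
    (hadj : ¬ G.Adj i j) : A i j = 0 :=
  not_not.mp fun h => hadj ((hA.2 i j hij).mp h)

lemma ncard_le_ncard_compl_of_mul_self_eq (hA : A ∈ SOfGraph G) {a b : ℝ}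
    (hAA : A * A = a • A - b • 1) (hnbr : ∀ v, ∃ w, G.Adj v w) {S : Set V}
    (hS : ∀ x ∈ S, ∀ y ∈ S, x ≠ y → ¬ G.Adj x y) : S.ncard ≤ Sᶜ.ncard := by
  have hzero : ∀ i ∈ S, ∀ j ∈ S, i ≠ j → A i j = 0 := fun i hi j hj hij =>
    apply_eq_zero_of_mem_SOfGraph hA hij (hS i hi j hj hij)
  refine ncard_le_ncard_compl_of_orthogonal_rows A S hzero (fun i hi j hj hij => ?_) ?_
  · rw [hA.1.eq, hAA, Matrix.sub_apply, Matrix.smul_apply, Matrix.smul_apply, one_apply_ne hij,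
      hzero i hi j hj hij]
    simp
  · intro i hi
    obtain ⟨k, hik⟩ := hnbr i
    exact ⟨k, fun hk => hS i hi k hk hik.ne hik, (hA.2 i k hik.ne).mpr hik⟩

end SOfGraph

/-- In a connected graph on `n` vertices with `q(G) = 2`, every independent set has
at most `⌊n/2⌋` vertices. -/
theorem stmt3 {V : Type*} [Fintype V] [DecidableEq V] (G : SimpleGraph V)
    (hconn : G.Connected) (hq : qGraph G = 2)
    (S : Set V) (hS : ∀ x ∈ S, ∀ y ∈ S, x ≠ y → ¬ G.Adj x y) :
    S.ncard ≤ Fintype.card V / 2 := by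
  obtain ⟨A, hA, hcard⟩ := exists_mem_SOfGraph_ncard_spectrum_eq_qGraph G (by omega)
  rw [hq] at hcard
  obtain ⟨l, m, -, hspec⟩ := Set.ncard_eq_two.mp hcard
  have hH := isHermitian_of_mem_SOfGraph hA
  have : Nontrivial V :=
    Fintype.one_lt_card_iff_nontrivial.mp (hcard ▸ hH.ncard_spectrum_le_card :)
  have hle := ncard_le_ncard_compl_of_mul_self_eq hA
    (hH.mul_self_eq_of_spectrum_subset_pair hspec.subset)
    hconn.preconnected.exists_adj_of_nontrivial hS
  have hsum := Set.ncard_add_ncard_compl S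
  rw [Nat.card_eq_fintype_card] at hsum
  omega
end

section
/- If G is a connected finite simple graph on n ≥ 3 vertices with q(G) = 2, then G has at least 2n − 4 edges. -/
open Matrix

/-!
If `A ∈ S(G)` has exactly two eigenvalues `l, m`, then `(A - l)(A - m) = 0`, so `A²` vanishes at
every nonadjacent pair `i ≠ j`. There `(A²) i j` is a sum of nonzero products over the common
neighbours of `i` and `j`, so no two nonadjacent vertices have exactly one common neighbour.

Layer the vertices by their distance from a vertex `v`. A vertex `u` at distance `d ≥ 2` then has
two neighbours in layer `d - 1`: the common neighbours of `u` and a vertex of layer `d - 2`.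
Counting each edge at its farther endpoint gives at least `2n - 2 - deg v` edges. For `v` of
minimum degree `δ` this suffices if `δ ≤ 2`, and `2e ≥ nδ` suffices if `δ ≥ 4`. If `δ = 3`, one
more edge is found: either an edge inside a layer, or a farthest vertex whose at least three
neighbours all lie one layer closer.
-/

open Finset

theorem IsSelfAdjoint.sub_algebraMap_mul_sub_algebraMap_eq_zero {A : Type*} [Ring A] [StarRing A]
    [Algebra ℝ A] [TopologicalSpace A] [ContinuousFunctionalCalculus ℝ A IsSelfAdjoint]
    {a : A} (ha : IsSelfAdjoint a) {l m : ℝ} (hlm : spectrum ℝ a ⊆ {l, m}) :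
    (a - algebraMap ℝ A l) * (a - algebraMap ℝ A m) = 0 := by
  calc (a - algebraMap ℝ A l) * (a - algebraMap ℝ A m)
      = cfc (fun x => (x - l) * (x - m)) a := by
        rw [cfc_mul _ _ a, cfc_sub _ _ a, cfc_sub _ _ a, cfc_id' ℝ a, cfc_const l a, cfc_const m a]
    _ = cfc (0 : ℝ → ℝ) a := cfc_congr fun x hx => by
        rcases hlm hx with rfl | rfl <;> simp
    _ = 0 := cfc_zero ℝ a

namespace SimpleGraph

variable {V : Type*} {G : SimpleGraph V}

def NoUniqueCommonNeighbor (G : SimpleGraph V) : Prop :=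
  ∀ ⦃i j k : V⦄, i ≠ j → ¬G.Adj i j → G.commonNeighbors i j ≠ {k}

theorem noUniqueCommonNeighbor_of_mul_self_apply_eq_zero [Fintype V] {R : Type*} [Semiring R]
    [NoZeroDivisors R] {A : Matrix V V R} (hA : ∀ i j, i ≠ j → (A i j ≠ 0 ↔ G.Adj i j))
    (hAA : ∀ i j, i ≠ j → ¬G.Adj i j → (A * A) i j = 0) : G.NoUniqueCommonNeighbor := by
  intro i j k hij hnadj hk
  have hAij : A i j = 0 := not_not.mp fun h => hnadj ((hA i j hij).mp h)
  have hcommon : ∀ k', A i k' ≠ 0 → A k' j ≠ 0 → k' ∈ G.commonNeighbors i j := by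
    intro k' hik' hk'j
    have hk'i : k' ≠ i := by rintro rfl; exact hk'j hAij
    have hk'j' : k' ≠ j := by rintro rfl; exact hik' hAij
    exact G.mem_commonNeighbors.mpr
      ⟨(hA i k' hk'i.symm).mp hik', ((hA k' j hk'j').mp hk'j).symm⟩
  have hsum : (A * A) i j = A i k * A k j := by
    refine Fintype.sum_eq_single k fun k' hk' => ?_
    by_contra hne
    have := hcommon k' (left_ne_zero_of_mul hne) (right_ne_zero_of_mul hne)
    exact hk' (by rwa [hk] at this)
  obtain ⟨hik, hjk⟩ := G.mem_commonNeighbors.mp (hk ▸ Set.mem_singleton k)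
  refine mul_ne_zero ((hA i k hik.ne).mpr hik) ((hA k j hjk.ne.symm).mpr hjk.symm) ?_
  rw [← hsum, hAA i j hij hnadj]

theorem exists_adj_dist_add_one_eq {v u : V} (h : G.dist v u ≠ 0) :
    ∃ w, G.Adj w u ∧ G.dist v w + 1 = G.dist v u := by
  rw [dist_comm] at h
  obtain ⟨p, hp⟩ := exists_walk_of_dist_ne_zero h
  cases p with
  | nil => simp at h
  | @cons _ w _ hadj q =>
    refine ⟨w, hadj.symm, ?_⟩
    have hq : G.dist v w ≤ q.length := dist_comm (G := G) ▸ dist_le q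
    have := hadj.symm.diff_dist_adj (u := v)
    rw [Walk.length_cons, dist_comm] at hp
    omega

variable [Fintype V] [DecidableRel G.Adj]

variable (G) in
noncomputable def closerNeighborFinset (v u : V) : Finset V :=
  {w ∈ G.neighborFinset u | G.dist v w < G.dist v u}

theorem mem_closerNeighborFinset {v u w : V} :
    w ∈ G.closerNeighborFinset v u ↔ G.Adj u w ∧ G.dist v w < G.dist v u := by
  simp [closerNeighborFinset]

theorem two_le_card_closerNeighborFinset (hG : G.NoUniqueCommonNeighbor) {v u : V}
    (h : 2 ≤ G.dist v u) : 2 ≤ #(G.closerNeighborFinset v u) := by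
  obtain ⟨w, hwu, hw⟩ := exists_adj_dist_add_one_eq (by omega : G.dist v u ≠ 0)
  obtain ⟨x, hxw, hx⟩ := exists_adj_dist_add_one_eq (by omega : G.dist v w ≠ 0)
  have hxu : ¬G.Adj x u := fun hadj => by have := hadj.diff_dist_adj (u := v); omega
  have hxu' : x ≠ u := by rintro rfl; omega
  have hwmem : w ∈ G.commonNeighbors x u := G.mem_commonNeighbors.mpr ⟨hxw, hwu.symm⟩
  obtain ⟨b, hbmem, hbw⟩ : ∃ b ∈ G.commonNeighbors x u, b ≠ w := by
    by_contra! hall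
    exact hG hxu' hxu (Set.eq_singleton_iff_unique_mem.mpr ⟨hwmem, hall⟩)
  obtain ⟨hxb, hub⟩ := G.mem_commonNeighbors.mp hbmem
  have hb := hxb.diff_dist_adj (u := v)
  refine one_lt_card.mpr ⟨w, ?_, b, ?_, hbw.symm⟩ <;> rw [mem_closerNeighborFinset]
  · exact ⟨hwu.symm, by omega⟩
  · exact ⟨hub, by omega⟩

theorem min_dist_two_le_card_closerNeighborFinset (hG : G.NoUniqueCommonNeighbor) (v u : V) :
    min (G.dist v u) 2 ≤ #(G.closerNeighborFinset v u) := by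
  obtain h | h | h : G.dist v u = 0 ∨ G.dist v u = 1 ∨ 2 ≤ G.dist v u := by omega
  · simp [h]
  · obtain ⟨w, hwu, hw⟩ := exists_adj_dist_add_one_eq (by omega : G.dist v u ≠ 0)
    rw [h, min_eq_left one_le_two, Nat.one_le_iff_ne_zero, ← pos_iff_ne_zero, card_pos]
    exact ⟨w, mem_closerNeighborFinset.mpr ⟨hwu.symm, by omega⟩⟩
  · exact (min_le_right _ _).trans (two_le_card_closerNeighborFinset hG h)

theorem Connected.sum_min_dist_two_add_degree_add_two (hconn : G.Connected) (v : V) :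
    ∑ u, min (G.dist v u) 2 + G.degree v + 2 = 2 * Fintype.card V := by
  classical
  have hdeg : G.degree v = ∑ u, if G.Adj v u then 1 else 0 := by
    rw [sum_boole, ← card_neighborFinset_eq_degree, neighborFinset_eq_filter, Nat.cast_id]
  have hterm : ∀ u, min (G.dist v u) 2 + (if G.Adj v u then 1 else 0)
      + (if u = v then 2 else 0) = 2 := by
    intro u
    by_cases huv : u = v
    · subst huv; simp
    by_cases hadj : G.Adj v u
    · simp [huv, hadj, dist_eq_one_iff_adj.mpr hadj]
    · have := hconn.one_lt_dist_of_ne_of_not_adj (Ne.symm huv) hadj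
      simp [huv, hadj]; omega
  calc ∑ u, min (G.dist v u) 2 + G.degree v + 2
      = ∑ u, (min (G.dist v u) 2 + (if G.Adj v u then 1 else 0) + (if u = v then 2 else 0)) := by
        simp only [sum_add_distrib, hdeg, sum_ite_eq', mem_univ, if_true]
    _ = 2 * Fintype.card V := by simp [hterm, mul_comm]

/-- Each edge `s(u, w)` with `w` strictly closer to `v` than `u` is counted once, at `u`. -/
theorem sum_card_closerNeighborFinset_le_card (v : V) {T : Finset (Sym2 V)}
    (hT : ∀ u w, G.Adj u w → G.dist v w < G.dist v u → s(u, w) ∈ T) :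
    ∑ u, #(G.closerNeighborFinset v u) ≤ #T := by
  rw [← card_sigma]
  refine card_le_card_of_injOn (fun p => s(p.1, p.2)) (fun p hp => ?_) ?_
  · obtain ⟨-, hp⟩ := mem_sigma.mp hp
    exact hT _ _ (mem_closerNeighborFinset.mp hp).1 (mem_closerNeighborFinset.mp hp).2
  · rintro ⟨u, w⟩ hp ⟨u', w'⟩ hq he
    simp only [coe_sigma, Set.mem_sigma_iff, mem_coe, mem_closerNeighborFinset] at hp hq
    rcases Sym2.eq_iff.mp he with ⟨rfl, rfl⟩ | ⟨rfl, rfl⟩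
    · rfl
    · dsimp only at hp hq
      omega

theorem exists_degree_le_card_closerNeighborFinset [Nonempty V] (v : V)
    (h : ∀ x y, G.Adj x y → G.dist v x ≠ G.dist v y) :
    ∃ u, G.degree u ≤ #(G.closerNeighborFinset v u) := by
  obtain ⟨u, -, hu⟩ := exists_max_image univ (G.dist v) univ_nonempty
  refine ⟨u, card_neighborFinset_eq_degree G u ▸ card_le_card fun w hw => ?_⟩
  rw [mem_neighborFinset] at hw
  exact mem_closerNeighborFinset.mpr ⟨hw, (hu w (mem_univ w)).lt_of_ne (h u w hw).symm⟩

theorem sum_min_dist_two_le_sum_card_closerNeighborFinset (hG : G.NoUniqueCommonNeighbor)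
    (v : V) : ∑ u, min (G.dist v u) 2 ≤ ∑ u, #(G.closerNeighborFinset v u) :=
  sum_le_sum fun u _ => min_dist_two_le_card_closerNeighborFinset hG v u

theorem sum_card_closerNeighborFinset_le_card_edgeFinset (v : V) :
    ∑ u, #(G.closerNeighborFinset v u) ≤ #G.edgeFinset :=
  sum_card_closerNeighborFinset_le_card v fun _ _ huw _ => G.mem_edgeFinset.mpr huw

theorem sum_min_dist_two_lt_card_edgeFinset [Nonempty V] (hG : G.NoUniqueCommonNeighbor)
    (hδ : 3 ≤ G.minDegree) (v : V) : ∑ u, min (G.dist v u) 2 < #G.edgeFinset := by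
  classical
  have hle := sum_min_dist_two_le_sum_card_closerNeighborFinset hG v
  by_cases hlevel : ∃ x y, G.Adj x y ∧ G.dist v x = G.dist v y
  · obtain ⟨x, y, hxy, hdist⟩ := hlevel
    have hedges := sum_card_closerNeighborFinset_le_card (T := G.edgeFinset.erase s(x, y)) v
      fun u w huw hlt => mem_erase.mpr ⟨fun he => by
        rcases Sym2.eq_iff.mp he with ⟨rfl, rfl⟩ | ⟨rfl, rfl⟩ <;> omega,
        G.mem_edgeFinset.mpr huw⟩
    have hmem : s(x, y) ∈ G.edgeFinset := G.mem_edgeFinset.mpr hxy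
    have := card_pos.mpr ⟨_, hmem⟩
    rw [card_erase_of_mem hmem] at hedges
    omega
  · push Not at hlevel
    obtain ⟨u, hu⟩ := exists_degree_le_card_closerNeighborFinset v hlevel
    have hlt : ∑ u, min (G.dist v u) 2 < ∑ u, #(G.closerNeighborFinset v u) := by
      refine sum_lt_sum (fun u _ => min_dist_two_le_card_closerNeighborFinset hG v u)
        ⟨u, mem_univ u, ?_⟩
      have := G.minDegree_le_degree u
      have := min_le_right (G.dist v u) 2
      omega
    exact hlt.trans_le (sum_card_closerNeighborFinset_le_card_edgeFinset v)

theorem Connected.two_mul_card_sub_four_le_card_edgeFinset (hconn : G.Connected)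
    (hG : G.NoUniqueCommonNeighbor) : 2 * Fintype.card V - 4 ≤ #G.edgeFinset := by
  have := hconn.nonempty
  obtain ⟨v, hv⟩ := G.exists_minimal_degree_vertex
  have hdeg : Fintype.card V * G.degree v ≤ 2 * #G.edgeFinset := by
    rw [← sum_degrees_eq_twice_card_edges, ← hv, ← smul_eq_mul, ← card_univ, ← sum_const]
    exact sum_le_sum fun u _ => G.minDegree_le_degree u
  have hsum := hconn.sum_min_dist_two_add_degree_add_two v
  obtain hδ | hδ | hδ : G.degree v ≤ 2 ∨ G.degree v = 3 ∨ 4 ≤ G.degree v := by omega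
  · have := sum_min_dist_two_le_sum_card_closerNeighborFinset hG v
    have := sum_card_closerNeighborFinset_le_card_edgeFinset (G := G) v
    omega
  · have := sum_min_dist_two_lt_card_edgeFinset hG (hv ▸ hδ.ge) v
    omega
  · have := Nat.mul_le_mul_left (Fintype.card V) hδ
    omega

end SimpleGraph

theorem noUniqueCommonNeighbor_of_mem_SOfGraph {V : Type*} [Fintype V] [DecidableEq V]
    {G : SimpleGraph V} {A : Matrix V V ℝ} (hA : A ∈ SOfGraph G)
    (hspec : (spectrum ℝ A).ncard = 2) : G.NoUniqueCommonNeighbor := by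
  obtain ⟨hsymm, hpattern⟩ := hA
  obtain ⟨l, m, -, hlm⟩ := Set.ncard_eq_two.mp hspec
  have hself : IsSelfAdjoint A :=
    Matrix.isHermitian_iff_isSelfAdjoint.mp (Matrix.isHermitian_iff_isSymm.mpr hsymm)
  have hquad := hself.sub_algebraMap_mul_sub_algebraMap_eq_zero hlm.subset
  refine G.noUniqueCommonNeighbor_of_mul_self_apply_eq_zero hpattern fun i j hij hnadj => ?_
  have hAij : A i j = 0 := not_not.mp fun h => hnadj ((hpattern i j hij).mp h)
  have := congrFun (congrFun hquad i) j
  simpa [sub_mul, mul_sub, Matrix.algebraMap_eq_diagonal, hij, hAij] using this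

theorem stmt9_general {V : Type*} [Fintype V] [DecidableEq V] (G : SimpleGraph V)
    (hconn : G.Connected) (hq : qGraph G = 2) :
    2 * Fintype.card V - 4 ≤ G.edgeSet.ncard := by
  classical
  rw [qGraph] at hq
  obtain ⟨A, hA, hspec⟩ : 2 ∈ (fun A => (spectrum ℝ A).ncard) '' SOfGraph G :=
    hq ▸ Nat.sInf_mem (Nat.nonempty_of_pos_sInf (by omega))
  rw [← SimpleGraph.coe_edgeFinset, Set.ncard_coe_finset]
  exact hconn.two_mul_card_sub_four_le_card_edgeFinset
    (noUniqueCommonNeighbor_of_mem_SOfGraph hA hspec)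

/-- A connected graph on `n ≥ 3` vertices with `q(G) = 2` has at least `2n - 4` edges. -/
theorem stmt9 {V : Type*} [Fintype V] [DecidableEq V] (G : SimpleGraph V)
    (hconn : G.Connected) (hn : 3 ≤ Fintype.card V) (hq : qGraph G = 2) :
    2 * Fintype.card V - 4 ≤ G.edgeSet.ncard :=
  stmt9_general G hconn hq
end

section
/- Let G be a connected finite simple graph with minimum degree at least 3, and let v be a vertex of G. Suppose that every vertex of N_i(v) for 2 ≤ i ≤ ε(v) − 1 has exactly two predecessors, that each set N_i(v) is an independent set, and that |N_j(v)| = |N_{j−1}(v)| = |N_{j−2}(v)| = 3 for some index j with 3 ≤ j ≤ ε(v) − 1. Then q(G) ≥ 3. -/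
open Matrix

/-!
If `A ∈ S(G)` has at most two eigenvalues `a, b`, then `A² = (a + b) A - a b I`, so `(A²)_{uw} = 0`
for distinct non-adjacent `u, w`. But if `u` and `w` have exactly one common neighbour `m`, then
`(A²)_{uw} = A_{um} A_{mw} ≠ 0`. Such a pair lies in `N_{j-2}(v) × N_j(v)`: take `u ∈ N_j(v)` with
predecessors `m₁, m₂`. If some `w ∈ N_{j-2}(v)` is adjacent to exactly one of them, `(w, u)` works.
Otherwise `m₁, m₂` have the same two predecessors, so the third vertex `w` of `N_{j-2}(v)` has the
third vertex `m` of `N_{j-1}(v)` as its only successor, and `w` with any successor of `m` works.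
-/

open Polynomial

theorem Set.exists_subset_pair_of_ncard_le_two {α : Type*} [Nonempty α] {s : Set α}
    (hs : s.Finite) (h : s.ncard ≤ 2) : ∃ a b, s ⊆ {a, b} := by
  interval_cases hn : s.ncard
  · obtain rfl := (Set.ncard_eq_zero hs).1 hn
    exact ⟨Classical.arbitrary α, Classical.arbitrary α, Set.empty_subset _⟩
  · obtain ⟨a, rfl⟩ := Set.ncard_eq_one.1 hn
    exact ⟨a, a, by simp⟩
  · obtain ⟨a, b, -, rfl⟩ := Set.ncard_eq_two.1 hn
    exact ⟨a, b, subset_rfl⟩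

theorem Matrix.IsSymm.mul_self_eq_of_spectrum_subset_pair {n : Type*} [Fintype n] [DecidableEq n]
    {A : Matrix n n ℝ} (hA : A.IsSymm) {a b : ℝ} (hs : spectrum ℝ A ⊆ {a, b}) :
    A * A = (a + b) • A - (a * b) • 1 := by
  have : IsSelfAdjoint A := Matrix.isHermitian_iff_isSymm.mpr hA
  -- `(X - a)(X - b)` vanishes on the spectrum, hence at `A` by the functional calculus.
  have h : aeval A ((X - C a) * (X - C b)) = 0 := by
    rw [← cfc_polynomial _ A, ← cfc_zero ℝ A]
    refine cfc_congr fun x hx => ?_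
    rcases hs hx with rfl | rfl <;> simp
  simp only [map_mul, map_sub, aeval_X, aeval_C, Algebra.algebraMap_eq_smul_one] at h
  rw [← sub_eq_zero, ← h]
  simp only [sub_mul, mul_sub, smul_mul_assoc, mul_smul_comm, one_mul, mul_one]
  module

namespace SimpleGraph

variable {V : Type*} {G : SimpleGraph V}

theorem adjMatrix_mem_SOfGraph [Fintype V] [DecidableEq V] [DecidableRel G.Adj] :
    G.adjMatrix ℝ ∈ SOfGraph G :=
  ⟨G.isSymm_adjMatrix, fun i j _ => by by_cases h : G.Adj i j <;> simp [h]⟩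

theorem apply_eq_zero_of_mem_SOfGraph [Fintype V] [DecidableEq V] {A : Matrix V V ℝ}
    (hA : A ∈ SOfGraph G) {u w : V} (huw : u ≠ w) (hadj : ¬G.Adj u w) : A u w = 0 :=
  not_not.1 fun h => hadj ((hA.2 u w huw).1 h)

theorem mul_self_apply_eq_of_commonNeighbors_eq_singleton [Fintype V] [DecidableEq V]
    {A : Matrix V V ℝ} (hA : A ∈ SOfGraph G) {u w m : V} (huw : u ≠ w) (hadj : ¬G.Adj u w)
    (hm : G.commonNeighbors u w = {m}) : (A * A) u w = A u m * A m w := by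
  rw [Matrix.mul_apply, Finset.sum_eq_single m (fun x _ hxm => ?_) (by simp)]
  by_contra h
  obtain ⟨hux, hxw⟩ := mul_ne_zero_iff.1 h
  have hAuw := apply_eq_zero_of_mem_SOfGraph hA huw hadj
  have hu_ne : u ≠ x := by rintro rfl; exact hxw hAuw
  have hw_ne : x ≠ w := by rintro rfl; exact hux hAuw
  have : x ∈ G.commonNeighbors u w := ⟨(hA.2 u x hu_ne).1 hux, ((hA.2 x w hw_ne).1 hxw).symm⟩
  exact hxm (by simpa [hm] using this)

theorem three_le_ncard_spectrum_of_commonNeighbors_eq_singleton [Fintype V] [DecidableEq V]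
    {A : Matrix V V ℝ} (hA : A ∈ SOfGraph G) {u w m : V} (huw : u ≠ w) (hadj : ¬G.Adj u w)
    (hm : G.commonNeighbors u w = {m}) : 3 ≤ (spectrum ℝ A).ncard := by
  by_contra! hlt
  obtain ⟨a, b, hab⟩ :=
    Set.exists_subset_pair_of_ncard_le_two A.finite_spectrum (Nat.le_of_lt_succ hlt)
  have hmem : m ∈ G.commonNeighbors u w := hm ▸ rfl
  have key := congr_fun₂ (hA.1.mul_self_eq_of_spectrum_subset_pair hab) u w
  simp only [mul_self_apply_eq_of_commonNeighbors_eq_singleton hA huw hadj hm, Matrix.sub_apply,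
    Matrix.smul_apply, apply_eq_zero_of_mem_SOfGraph hA huw hadj, Matrix.one_apply_ne huw,
    smul_eq_mul, mul_zero, sub_zero] at key
  exact mul_ne_zero ((hA.2 u m (G.ne_of_adj hmem.1)).2 hmem.1)
    ((hA.2 m w (G.ne_of_adj hmem.2).symm).2 hmem.2.symm) key

theorem three_le_qGraph_of_commonNeighbors_eq_singleton [Fintype V] [DecidableEq V]
    {u w m : V} (huw : u ≠ w) (hadj : ¬G.Adj u w) (hm : G.commonNeighbors u w = {m}) :
    3 ≤ qGraph G := by
  classical
  refine le_csInf ⟨_, G.adjMatrix ℝ, adjMatrix_mem_SOfGraph, rfl⟩ ?_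
  rintro _ ⟨A, hA, rfl⟩
  exact three_le_ncard_spectrum_of_commonNeighbors_eq_singleton hA huw hadj hm

section DistanceLevels

variable {v x y m : V} {i : ℕ}

theorem Adj.dist_eq_add_one_or_add_one_eq (hind : ∀ ⦃x y⦄, G.Adj x y → G.dist v x ≠ G.dist v y)
    (h : G.Adj x y) : G.dist v y = G.dist v x + 1 ∨ G.dist v y + 1 = G.dist v x := by
  have := hind h
  rcases h.diff_dist_adj (u := v) with h' | h' | h' <;> omega

theorem dist_eq_of_mem_commonNeighbors (hx : G.dist v x = i) (hy : G.dist v y = i + 2)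
    (hm : m ∈ G.commonNeighbors x y) : G.dist v m = i + 1 := by
  rcases hm.1.diff_dist_adj (u := v) with h | h | h <;>
    rcases hm.2.symm.diff_dist_adj (u := v) with h' | h' | h' <;> omega

theorem ne_and_not_adj_of_dist_eq_add_two (hx : G.dist v x = i) (hy : G.dist v y = i + 2) :
    x ≠ y ∧ ¬G.Adj x y := by
  refine ⟨by rintro rfl; omega, fun h => ?_⟩
  rcases h.diff_dist_adj (u := v) with h' | h' | h' <;> omega

theorem exists_adj_dist_eq_add_one [Finite V]
    (hind : ∀ ⦃x y⦄, G.Adj x y → G.dist v x ≠ G.dist v y) (hx : G.dist v x = i + 1)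
    (hpred : {w | G.Adj x w ∧ G.dist v w = i}.ncard < (G.neighborSet x).ncard) :
    ∃ y, G.Adj x y ∧ G.dist v y = i + 2 := by
  by_contra! h
  have hsub : G.neighborSet x ⊆ {w | G.Adj x w ∧ G.dist v w = i} := fun y hxy => by
    have := h y hxy
    refine ⟨hxy, ?_⟩
    rcases hxy.dist_eq_add_one_or_add_one_eq hind with h' | h' <;> omega
  exact (Set.ncard_le_ncard hsub).not_gt hpred

theorem ncard_adj_dist_eq_zero_le_one (hx : G.dist v x ≠ 0) :
    {w | G.Adj x w ∧ G.dist v w = 0}.ncard ≤ 1 := by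
  refine (Set.ncard_le_ncard (t := {v}) fun w hw => ?_).trans_eq (Set.ncard_singleton v)
  exact (((Reachable.of_dist_ne_zero hx).trans hw.1.reachable).dist_eq_zero_iff.1 hw.2).symm

theorem commonNeighbors_eq_singleton_of_forall_eq (hx : G.dist v x = i) (hy : G.dist v y = i + 2)
    (hxm : G.Adj x m) (hym : G.Adj y m)
    (huniq : ∀ m', G.dist v m' = i + 1 → G.Adj x m' → G.Adj y m' → m' = m) :
    G.commonNeighbors x y = {m} := by
  refine Set.eq_singleton_iff_unique_mem.2 ⟨⟨hxm, hym⟩, fun m' hm' => ?_⟩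
  exact huniq m' (dist_eq_of_mem_commonNeighbors hx hy hm') hm'.1 hm'.2

theorem commonNeighbors_eq_singleton_of_adj_of_not_adj {w u m₁ m₂ : V}
    (hw : G.dist v w = i) (hu : G.dist v u = i + 2)
    (hum : ∀ m, G.Adj u m → G.dist v m = i + 1 → m = m₁ ∨ m = m₂)
    (hum₁ : G.Adj u m₁) (hwm₁ : G.Adj w m₁) (hwm₂ : ¬G.Adj w m₂) :
    G.commonNeighbors w u = {m₁} := by
  refine commonNeighbors_eq_singleton_of_forall_eq hw hu hwm₁ hum₁ fun m hm hwm hum' => ?_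
  exact (hum m hum' hm).resolve_right fun h => hwm₂ (h ▸ hwm)

theorem exists_commonNeighbors_eq_singleton [Finite V]
    (hdeg : ∀ x, 3 ≤ (G.neighborSet x).ncard)
    (hind : ∀ ⦃x y⦄, G.Adj x y → G.dist v x ≠ G.dist v y)
    (hpred₁ : ∀ x, G.dist v x = i + 1 → {w | G.Adj x w ∧ G.dist v w = i}.ncard ≤ 2)
    (hpred₂ : ∀ x, G.dist v x = i + 2 → {w | G.Adj x w ∧ G.dist v w = i + 1}.ncard = 2)
    (hpred₃ : ∀ x, G.dist v x = i + 3 → {w | G.Adj x w ∧ G.dist v w = i + 2}.ncard = 2)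
    (h₁ : 3 ≤ {x | G.dist v x = i + 1}.ncard) (h₂ : {x | G.dist v x = i + 2}.ncard ≤ 3)
    {u : V} (hu : G.dist v u = i + 3) :
    ∃ x y m, G.dist v x = i + 1 ∧ G.dist v y = i + 3 ∧ G.commonNeighbors x y = {m} := by
  obtain ⟨m₁, m₂, hm₁₂, hpu⟩ := Set.ncard_eq_two.1 (hpred₃ u hu)
  have hum : ∀ m, G.Adj u m → G.dist v m = i + 2 → m = m₁ ∨ m = m₂ := fun m h h' => by
    simpa [hpu] using (show m ∈ {w | G.Adj u w ∧ G.dist v w = i + 2} from ⟨h, h'⟩)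
  obtain ⟨hum₁, hm₁⟩ : m₁ ∈ {w | G.Adj u w ∧ G.dist v w = i + 2} := by simp [hpu]
  obtain ⟨hum₂, hm₂⟩ : m₂ ∈ {w | G.Adj u w ∧ G.dist v w = i + 2} := by simp [hpu]
  by_cases! hS : ∀ w, G.dist v w = i + 1 → (G.Adj w m₁ ↔ G.Adj w m₂)
  · obtain ⟨w, hw, hwm₁⟩ :
        ∃ w, G.dist v w = i + 1 ∧ w ∉ {w | G.Adj m₁ w ∧ G.dist v w = i + 1} :=
      Set.exists_mem_notMem_of_ncard_lt_ncard ((hpred₂ m₁ hm₁).trans_lt h₁)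
    replace hwm₁ : ¬G.Adj w m₁ := fun h => hwm₁ ⟨h.symm, hw⟩
    have hwm₂ : ¬G.Adj w m₂ := (hS w hw).not.1 hwm₁
    have hne : ∀ m, G.Adj w m → m ≠ m₁ ∧ m ≠ m₂ := fun m h =>
      ⟨fun h' => hwm₁ (h' ▸ h), fun h' => hwm₂ (h' ▸ h)⟩
    obtain ⟨m, hwm, hm⟩ := exists_adj_dist_eq_add_one hind hw ((hpred₁ w hw).trans_lt (hdeg w))
    obtain ⟨y, hmy, hy⟩ := exists_adj_dist_eq_add_one hind hm ((hpred₂ m hm).trans_lt (hdeg m))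
    refine ⟨w, y, m, hw, hy, commonNeighbors_eq_singleton_of_forall_eq hw hy hwm hmy.symm
      fun m' hm' hwm' _ => ?_⟩
    by_contra hm'm
    have := (Set.three_lt_ncard_iff (s := {x | G.dist v x = i + 2})).2
      ⟨m₁, m₂, m, m', hm₁, hm₂, hm, hm', hm₁₂, (hne m hwm).1.symm, (hne m' hwm').1.symm,
        (hne m hwm).2.symm, (hne m' hwm').2.symm, Ne.symm hm'm⟩
    omega
  · obtain ⟨w, hw, ⟨hwm₁, hwm₂⟩ | ⟨hwm₁, hwm₂⟩⟩ := hS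
    · exact ⟨w, u, m₁, hw, hu,
        commonNeighbors_eq_singleton_of_adj_of_not_adj hw hu hum hum₁ hwm₁ hwm₂⟩
    · exact ⟨w, u, m₂, hw, hu, commonNeighbors_eq_singleton_of_adj_of_not_adj hw hu
        (fun m h h' => (hum m h h').symm) hum₂ hwm₂ hwm₁⟩

end DistanceLevels

end SimpleGraph

theorem stmt12_general {V : Type*} [Fintype V] [DecidableEq V] (G : SimpleGraph V)
    (hdeg : ∀ w : V, 3 ≤ (G.neighborSet w).ncard)
    (v : V)
    (hpred : ∀ i : ℕ, 2 ≤ i → i ≤ graphEccent G v - 1 → ∀ u : V, G.dist v u = i →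
      {w : V | G.Adj u w ∧ G.dist v w = i - 1}.ncard = 2)
    (hind : ∀ (i : ℕ) (w₁ w₂ : V), G.dist v w₁ = i → G.dist v w₂ = i → ¬ G.Adj w₁ w₂)
    (j : ℕ) (hj : 3 ≤ j) (hje : j ≤ graphEccent G v - 1)
    (h3 : {w : V | G.dist v w = j}.ncard = 3 ∧ {w : V | G.dist v w = j - 1}.ncard = 3 ∧
      {w : V | G.dist v w = j - 2}.ncard = 3) :
    3 ≤ qGraph G := by
  obtain ⟨i, rfl⟩ : ∃ i, j = i + 3 := ⟨j - 3, by omega⟩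
  obtain ⟨h₃, h₂, h₁⟩ := h3
  have hpred₁ : ∀ x, G.dist v x = i + 1 → {w | G.Adj x w ∧ G.dist v w = i}.ncard ≤ 2 := by
    intro x hx
    rcases Nat.eq_zero_or_pos i with rfl | hi
    · exact (SimpleGraph.ncard_adj_dist_eq_zero_le_one (by omega)).trans one_le_two
    · exact (hpred (i + 1) (by omega) (by omega) x hx).le
  obtain ⟨u, hu⟩ : {w | G.dist v w = i + 3}.Nonempty := Set.nonempty_of_ncard_ne_zero (by omega)
  obtain ⟨x, y, m, hx, hy, hxy⟩ := SimpleGraph.exists_commonNeighbors_eq_singleton hdeg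
    (fun x y hxy h => hind _ x y rfl h.symm hxy) hpred₁
    (hpred (i + 2) (by omega) (by omega)) (hpred (i + 3) (by omega) hje) h₁.ge h₂.le hu
  obtain ⟨hne, hnadj⟩ := SimpleGraph.ne_and_not_adj_of_dist_eq_add_two hx hy
  exact SimpleGraph.three_le_qGraph_of_commonNeighbors_eq_singleton hne hnadj hxy

/-- Let `G` be connected with minimum degree at least `3`, and let `v` be a vertex.
If every vertex of `N_i(v)` for `2 ≤ i ≤ ε(v) - 1` has exactly two predecessors,
each `N_i(v)` is independent, and `|N_j(v)| = |N_{j-1}(v)| = |N_{j-2}(v)| = 3` for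
some `3 ≤ j ≤ ε(v) - 1`, then `q(G) ≥ 3`. -/
theorem stmt12 {V : Type*} [Fintype V] [DecidableEq V] (G : SimpleGraph V)
    (hconn : G.Connected)
    (hdeg : ∀ w : V, 3 ≤ (G.neighborSet w).ncard)
    (v : V)
    (hpred : ∀ i : ℕ, 2 ≤ i → i ≤ graphEccent G v - 1 → ∀ u : V, G.dist v u = i →
      {w : V | G.Adj u w ∧ G.dist v w = i - 1}.ncard = 2)
    (hind : ∀ (i : ℕ) (w₁ w₂ : V), G.dist v w₁ = i → G.dist v w₂ = i → ¬ G.Adj w₁ w₂)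
    (j : ℕ) (hj : 3 ≤ j) (hje : j ≤ graphEccent G v - 1)
    (h3 : {w : V | G.dist v w = j}.ncard = 3 ∧ {w : V | G.dist v w = j - 1}.ncard = 3 ∧
      {w : V | G.dist v w = j - 2}.ncard = 3) :
    3 ≤ qGraph G :=
  stmt12_general G hdeg v hpred hind j hj hje h3
end
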